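/- For the exposing functional L(g) = ∫_D g(z) (1−z̄)/(1−z) dA(z) on A¹ there exist complex constants C₀, C₁ such that L(g) = C₀ g(0) + C₁ g′(0) for all g ∈ A¹. Consequently φ₂ = (1−z)/|1−z| (i.e., (1−z)/(|1−z|)) minus a polynomial lies in (A¹)^⊥, so φ₂ ∈ (A¹)^⊥ + C(D̄). -/

import Mathlib

open MeasureTheory Metric Complex Filter
open scoped ENNReal Topology

/-- The normalized area measure `dA = (1/π) · (Lebesgue measure restricted to the unit disc)`. -/
noncomputable def dA : Measure ℂ :=
  (ENNReal.ofReal (1 / Real.pi)) • (volume.restrict (ball (0 : ℂ) 1))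

/-- Membership in the Bergman space `A¹`: holomorphic on the unit disc and area-integrable. -/
def MemA1 (f : ℂ → ℂ) : Prop :=
  DifferentiableOn ℂ f (ball (0 : ℂ) 1) ∧ Integrable f dA

/-- The Bergman norm `‖f‖ = ∫_D |f| dA`. -/
noncomputable def bergNorm (f : ℂ → ℂ) : ℝ := ∫ z, ‖f z‖ ∂dA

/-- `L` is (the restriction to `A¹` of) a linear functional. -/
def IsA1Functional (L : (ℂ → ℂ) → ℂ) : Prop :=
  (∀ f g, MemA1 f → MemA1 g → L (fun z => f z + g z) = L f + L g) ∧
  (∀ (c : ℂ) (f), MemA1 f → L (fun z => c * f z) = c * L f)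

/-- `f` is a strongly exposed point of the closed unit ball of `A¹`: `f ∈ A¹`, `‖f‖ = 1`, and
there is a linear functional `L` of norm one with `L f = 1` such that any sequence in the closed
unit ball of `A¹` on which `L` tends to `1` converges to `f` in the Bergman norm. -/
def StronglyExposed (f : ℂ → ℂ) : Prop :=
  MemA1 f ∧ bergNorm f = 1 ∧
  ∃ L : (ℂ → ℂ) → ℂ, IsA1Functional L ∧ L f = 1 ∧
    (∀ g, MemA1 g → ‖L g‖ ≤ bergNorm g) ∧
    (∀ fn : ℕ → ℂ → ℂ, (∀ n, MemA1 (fn n) ∧ bergNorm (fn n) ≤ 1) →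
      Tendsto (fun n => L (fn n)) atTop (𝓝 1) →
      Tendsto (fun n => bergNorm (fun z => fn n z - f z)) atTop (𝓝 0))

/-- Membership in `(A¹)^⊥`, the annihilator of the Bergman space inside `L^∞(D)`. -/
def InAnnA1 (ψ : ℂ → ℂ) : Prop :=
  MemLp ψ ⊤ dA ∧ ∀ f, MemA1 f → ∫ z, f z * (starRingEnd ℂ) (ψ z) ∂dA = 0

/-- Membership in `(A¹)^⊥ + C(D̄)` as a subspace of `L^∞(D)`. -/
def InAnnPlusC (φ : ℂ → ℂ) : Prop :=
  ∃ g h : ℂ → ℂ, InAnnA1 g ∧ ContinuousOn h (closedBall (0 : ℂ) 1) ∧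
    ∀ᵐ z ∂dA, φ z = g z + h z

/-- The `L^∞`-distance of `φ` to the subspace `(A¹)^⊥ + C(D̄)`. -/
noncomputable def distAnnPlusC (φ : ℂ → ℂ) : ℝ≥0∞ :=
  ⨅ (ψ : ℂ → ℂ) (_ : InAnnPlusC ψ), eLpNorm (fun z => φ z - ψ z) ⊤ dA

/-- The Bergman projection `Pψ(z) = ∫_D ψ(w)/(1 - z w̄)² dA(w)`. -/
noncomputable def bergP (ψ : ℂ → ℂ) (z : ℂ) : ℂ :=
  ∫ w, ψ w / (1 - z * (starRingEnd ℂ) w) ^ 2 ∂dA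

/-! On the circle `|z| = r` one has `z̄ = r² / z`, so each of the two kernels `K` involved
restricts to that circle as `z⁻¹ u_r(z)` with `u_r` holomorphic on the disc, and by Cauchy's
formula the circle average of `g K` is `(g u_r)'(0)` for holomorphic `g`. Integrating in polar
coordinates, `∫ g K dA = ∫₀¹ 2r (g u_r)'(0) dr`, a combination of `g 0` and `g' 0`.
For `K = (1 - z̄)/(1 - z)`, `u_r = (z - r²)/(1 - z)` and `L g = (g 0 - g' 0)/2`; for `K` the
conjugate of `φ₂ - (1/2 - z)` the same computation gives `0`. -/

open Set Real ComplexConjugate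

theorem DiffContOnCl.circleAverage_sub_inv_smul_eq_deriv {E : Type*} [NormedAddCommGroup E]
    [NormedSpace ℂ E] [CompleteSpace E] {f : ℂ → E} {c : ℂ} {R : ℝ} (hR : 0 < R)
    (hf : DiffContOnCl ℂ f (ball c R)) :
    Real.circleAverage (fun z => (z - c)⁻¹ • f z) c R = deriv f c := by
  rw [circleAverage_eq_circleIntegral hR.ne']
  simp_rw [smul_smul, ← sq, inv_pow, ← one_div, hf.deriv_eq_smul_circleIntegral hR, one_div,
    inv_smul_smul₀ two_pi_I_ne_zero]

theorem Complex.polarCoord_symm_eq_circleMap (r θ : ℝ) :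
    Complex.polarCoord.symm (r, θ) = circleMap 0 r θ := by
  simp [circleMap, Complex.exp_mul_I, ← Complex.ofReal_cos, ← Complex.ofReal_sin]

theorem integral_Ioo_circleMap_eq_circleAverage {E : Type*} [NormedAddCommGroup E]
    [NormedSpace ℝ E] (f : ℂ → E) (c : ℂ) (r : ℝ) :
    ∫ θ in Ioo (-π) π, f (circleMap c r θ) = (2 * π) • circleAverage f c r := by
  have hper : Function.Periodic (fun θ => f (circleMap c r θ)) (2 * π) :=
    fun θ => by simp [periodic_circleMap c r θ]
  have := hper.intervalIntegral_add_eq (-π) 0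
  rw [circleAverage_def, smul_inv_smul₀ (by positivity), ← integral_Ioc_eq_integral_Ioo,
    ← intervalIntegral.integral_of_le (by linarith [pi_pos])]
  simpa [show -π + 2 * π = π by ring] using this

theorem Complex.integrableOn_comp_polarCoord_symm {E : Type*} [NormedAddCommGroup E]
    [NormedSpace ℝ E] {f : ℂ → E} (hf : Integrable f) :
    IntegrableOn (fun p : ℝ × ℝ => p.1 • f (Complex.polarCoord.symm p)) polarCoord.target := by
  have hf' : Integrable (fun p : ℝ × ℝ => f (measurableEquivRealProd.symm p)) :=
    (volume_preserving_equiv_real_prod.symm.integrable_comp_emb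
      measurableEquivRealProd.symm.measurableEmbedding).mpr hf
  have h := (integrableOn_image_iff_integrableOn_abs_det_fderiv_smul volume
    polarCoord.open_target.measurableSet
    (fun p _ => (hasFDerivAt_polarCoord_symm p).hasFDerivWithinAt)
    polarCoord.symm.injOn _).mp
    (by rw [polarCoord.symm_image_target_eq_source]; exact hf'.integrableOn)
  refine h.congr_fun (fun p hp => ?_) polarCoord.open_target.measurableSet
  simp only [det_fderivPolarCoordSymm, abs_of_pos (mem_Ioi.mp hp.1),
    measurableEquivRealProd_symm_polarCoord_symm_apply]

theorem integral_eq_integral_Ioi_circleAverage {E : Type*} [NormedAddCommGroup E]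
    [NormedSpace ℝ E] {f : ℂ → E} (hf : Integrable f) :
    ∫ z, f z = ∫ r in Ioi 0, (2 * π * r) • circleAverage f 0 r := by
  have hint := Complex.integrableOn_comp_polarCoord_symm hf
  rw [← Complex.integral_comp_polarCoord_symm, polarCoord_target] at *
  rw [Measure.volume_eq_prod] at hint ⊢
  rw [setIntegral_prod _ hint]
  refine setIntegral_congr_fun measurableSet_Ioi fun r _ => ?_
  simp only [integral_smul, Complex.polarCoord_symm_eq_circleMap,
    integral_Ioo_circleMap_eq_circleAverage, smul_smul, mul_comm r]

theorem setIntegral_ball_eq_integral_Ioo_circleAverage {E : Type*} [NormedAddCommGroup E]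
    [NormedSpace ℝ E] {f : ℂ → E} {R : ℝ} (hf : IntegrableOn f (ball 0 R)) :
    ∫ z in ball 0 R, f z = ∫ r in Ioo 0 R, (2 * π * r) • circleAverage f 0 r := by
  rw [← integral_indicator measurableSet_ball,
    integral_eq_integral_Ioi_circleAverage ((integrable_indicator_iff measurableSet_ball).mpr hf),
    setIntegral_eq_of_subset_of_forall_sdiff_eq_zero measurableSet_Ioi Ioo_subset_Ioi_self]
  · refine setIntegral_congr_fun measurableSet_Ioo fun r hr => ?_
    congr 1
    refine circleAverage_congr_sphere fun z hz => indicator_of_mem ?_ f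
    rw [mem_sphere_zero_iff_norm, abs_of_pos hr.1] at hz
    simpa [hz] using hr.2
  · rintro r ⟨hr0 : 0 < r, hrR⟩
    have hzero : circleAverage ((ball 0 R).indicator f) 0 r = 0 := by
      rw [circleAverage_congr_sphere (f₂ := fun _ => 0) fun z hz => indicator_of_notMem ?_ f]
      · simp [circleAverage_def]
      · simp_all [abs_of_pos hr0]
    rw [hzero, smul_zero]

theorem integral_two_mul_smul_add_sq_smul {E : Type*} [NormedAddCommGroup E] [NormedSpace ℝ E]
    [CompleteSpace E] (a b : E) :
    ∫ r in (0 : ℝ)..1, (2 * r) • (a + r ^ 2 • b) = a + (2⁻¹ : ℝ) • b := by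
  have h₁ : ∫ r in (0 : ℝ)..1, 2 * r = 1 := by
    rw [intervalIntegral.integral_const_mul, integral_id]; norm_num
  have h₃ : ∫ r in (0 : ℝ)..1, 2 * r * r ^ 2 = 2⁻¹ := by
    simp_rw [mul_assoc, ← pow_succ']
    norm_num [intervalIntegral.integral_const_mul]
  simp_rw [smul_add, smul_smul]
  rw [intervalIntegral.integral_add, intervalIntegral.integral_smul_const,
    intervalIntegral.integral_smul_const, h₁, h₃, one_smul]
  all_goals exact (by fun_prop : Continuous _).intervalIntegrable _ _

theorem integral_dA (f : ℂ → ℂ) : ∫ z, f z ∂dA = π⁻¹ • ∫ z in ball (0 : ℂ) 1, f z := by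
  rw [dA, integral_smul_measure, ENNReal.toReal_ofReal (by positivity), one_div]

theorem integrable_dA_iff {f : ℂ → ℂ} : Integrable f dA ↔ IntegrableOn f (ball 0 1) := by
  rw [dA, integrable_smul_measure (by simp [pi_pos]) ENNReal.ofReal_ne_top]
  rfl

theorem ae_mem_ball_dA : ∀ᵐ z ∂dA, z ∈ ball (0 : ℂ) 1 :=
  Measure.ae_smul_measure (ae_restrict_mem measurableSet_ball) _

theorem integral_dA_eq_integral_deriv {F : ℂ → ℂ} (hF : Integrable F dA) (h : ℝ → ℂ → ℂ)
    (hh : ∀ r ∈ Ioo (0 : ℝ) 1, DifferentiableOn ℂ (h r) (ball 0 1))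
    (hFh : ∀ r ∈ Ioo (0 : ℝ) 1, ∀ z ∈ sphere (0 : ℂ) r, F z = z⁻¹ * h r z) :
    ∫ z, F z ∂dA = ∫ r in (0 : ℝ)..1, (2 * r) • deriv (h r) 0 := by
  have hcircle : ∀ r ∈ Ioo (0 : ℝ) 1, circleAverage F 0 r = deriv (h r) 0 := fun r hr => by
    rw [circleAverage_congr_sphere (f₂ := fun z => (z - 0)⁻¹ • h r z)
      fun z hz => by simpa using hFh r hr z (by simpa [abs_of_pos hr.1] using hz)]
    exact DiffContOnCl.circleAverage_sub_inv_smul_eq_deriv hr.1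
      ((hh r hr).diffContOnCl_ball (closedBall_subset_ball hr.2))
  rw [integral_dA, setIntegral_ball_eq_integral_Ioo_circleAverage (integrable_dA_iff.mp hF),
    setIntegral_congr_fun measurableSet_Ioo fun r hr => by rw [hcircle r hr],
    intervalIntegral.integral_of_le zero_le_one, integral_Ioc_eq_integral_Ioo,
    ← integral_smul]
  refine setIntegral_congr_fun measurableSet_Ioo fun r _ => ?_
  rw [smul_smul]
  congr 1
  field_simp [pi_ne_zero]

theorem conj_eq_sq_div_of_mem_sphere {r : ℝ} {z : ℂ} (hz : z ∈ sphere (0 : ℂ) r) :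
    conj z = (r : ℂ) ^ 2 / z := by
  rw [mem_sphere_zero_iff_norm] at hz
  rcases eq_or_ne z 0 with rfl | hz0
  · simp
  rw [eq_div_iff hz0, mul_comm, mul_conj, normSq_eq_norm_sq, hz]
  push_cast; ring

theorem one_sub_conj (z : ℂ) : 1 - conj z = conj (1 - z) := by simp

theorem norm_one_sub_conj_div_one_sub_le_one (z : ℂ) : ‖(1 - conj z) / (1 - z)‖ ≤ 1 := by
  rw [norm_div, one_sub_conj, norm_conj]
  exact div_self_le_one _

theorem norm_one_sub_div_one_sub_conj_le_one (z : ℂ) : ‖(1 - z) / (1 - conj z)‖ ≤ 1 := by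
  rw [norm_div, one_sub_conj, norm_conj]
  exact div_self_le_one _

theorem one_sub_conj_div_one_sub_eq_of_mem_sphere {r : ℝ} (hr : r ∈ Ioo (0 : ℝ) 1) {z : ℂ}
    (hz : z ∈ sphere (0 : ℂ) r) :
    (1 - conj z) / (1 - z) = z⁻¹ * ((z - (r : ℂ) ^ 2) / (1 - z)) := by
  have hz0 : z ≠ 0 := ne_of_mem_sphere hz hr.1.ne'
  have hz1 : 1 - z ≠ 0 := sub_ne_zero.mpr fun h => by
    rw [← h, mem_sphere_zero_iff_norm, norm_one] at hz
    exact hr.2.ne' hz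
  rw [conj_eq_sq_div_of_mem_sphere hz]
  field_simp

theorem hasDerivAt_sub_div_one_sub (a : ℂ) :
    HasDerivAt (fun z : ℂ => (z - a) / (1 - z)) (1 - a) 0 := by
  simpa using ((hasDerivAt_id (0 : ℂ)).sub_const a).fun_div
    ((hasDerivAt_id (0 : ℂ)).const_sub 1) (by norm_num)

theorem differentiableOn_sub_div_one_sub (a : ℂ) :
    DifferentiableOn ℂ (fun z : ℂ => (z - a) / (1 - z)) (ball 0 1) :=
  (differentiableOn_id.sub_const a).div (differentiableOn_const 1 |>.sub differentiableOn_id)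
    fun z hz => sub_ne_zero.mpr fun h => by simp [← h] at hz

theorem memLp_top_one_sub_conj_div_one_sub : MemLp (fun z => (1 - conj z) / (1 - z)) ⊤ dA :=
  memLp_top_of_bound (by fun_prop (disch := measurability) : Measurable _).aestronglyMeasurable 1
    (ae_of_all _ norm_one_sub_conj_div_one_sub_le_one)

theorem MemA1.hasDerivAt_zero {g : ℂ → ℂ} (hg : MemA1 g) : HasDerivAt g (deriv g 0) 0 :=
  (hg.1.differentiableAt (ball_mem_nhds 0 one_pos)).hasDerivAt

theorem integral_mul_one_sub_conj_div_one_sub_dA {g : ℂ → ℂ} (hg : MemA1 g) :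
    ∫ z, g z * ((1 - conj z) / (1 - z)) ∂dA = 2⁻¹ * g 0 - 2⁻¹ * deriv g 0 := by
  rw [integral_dA_eq_integral_deriv (F := fun z => g z * ((1 - conj z) / (1 - z)))
    (hg.2.mul_of_top_left memLp_top_one_sub_conj_div_one_sub)
    (fun r z => g z * ((z - (r : ℂ) ^ 2) / (1 - z)))
    (fun r _ => hg.1.mul (differentiableOn_sub_div_one_sub _))
    (fun r hr z hz => by rw [one_sub_conj_div_one_sub_eq_of_mem_sphere hr hz]; ring)]
  have hderiv : ∀ r : ℝ, deriv (fun z => g z * ((z - (r : ℂ) ^ 2) / (1 - z))) 0 =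
      g 0 + r ^ 2 • -(g 0 + deriv g 0) := fun r => by
    rw [(hg.hasDerivAt_zero.fun_mul (hasDerivAt_sub_div_one_sub _)).deriv, Complex.real_smul]
    push_cast; ring
  simp_rw [hderiv, integral_two_mul_smul_add_sq_smul, Complex.real_smul]
  push_cast; ring

theorem memLp_top_one_sub_div_one_sub_conj_sub :
    MemLp (fun z => (1 - z) / (1 - conj z) - (2⁻¹ - z)) ⊤ dA := by
  refine memLp_top_of_bound
    (by fun_prop (disch := measurability) : Measurable _).aestronglyMeasurable (1 + (2⁻¹ + 1)) ?_
  filter_upwards [ae_mem_ball_dA] with z hz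
  have hz : ‖z‖ < 1 := mem_ball_zero_iff.mp hz
  calc ‖(1 - z) / (1 - conj z) - (2⁻¹ - z)‖
      ≤ ‖(1 - z) / (1 - conj z)‖ + (‖(2⁻¹ : ℂ)‖ + ‖z‖) :=
        (norm_sub_le _ _).trans (add_le_add_right (norm_sub_le _ _) _)
    _ ≤ 1 + (2⁻¹ + 1) := by
        gcongr
        · exact norm_one_sub_div_one_sub_conj_le_one z
        · norm_num

theorem inAnnA1_one_sub_div_one_sub_conj_sub :
    InAnnA1 (fun z => (1 - z) / (1 - conj z) - (2⁻¹ - z)) := by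
  refine ⟨memLp_top_one_sub_div_one_sub_conj_sub, fun f hf => ?_⟩
  have hconj : ∀ z : ℂ, conj ((1 - z) / (1 - conj z) - (2⁻¹ - z)) =
      (1 - conj z) / (1 - z) - 2⁻¹ + conj z := fun z => by
    simp only [map_sub, map_div₀, map_one, map_inv₀, map_ofNat, conj_conj]
    ring
  have hint : Integrable (fun z => f z * conj ((1 - z) / (1 - conj z) - (2⁻¹ - z))) dA :=
    hf.2.mul_of_top_left memLp_top_one_sub_div_one_sub_conj_sub.star
  simp_rw [hconj] at hint ⊢
  rw [integral_dA_eq_integral_deriv (F := fun z => f z * ((1 - conj z) / (1 - z) - 2⁻¹ + conj z))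
    hint (fun r z => f z * ((z - (r : ℂ) ^ 2) / (1 - z) - 2⁻¹ * z + (r : ℂ) ^ 2))
    (fun r _ => hf.1.mul (by have := differentiableOn_sub_div_one_sub ((r : ℂ) ^ 2); fun_prop))
    (fun r hr z hz => by
      rw [one_sub_conj_div_one_sub_eq_of_mem_sphere hr hz, conj_eq_sq_div_of_mem_sphere hz]
      have hz0 : z ≠ 0 := ne_of_mem_sphere hz hr.1.ne'
      field_simp)]
  have hderiv : ∀ r : ℝ,
      deriv (fun z => f z * ((z - (r : ℂ) ^ 2) / (1 - z) - 2⁻¹ * z + (r : ℂ) ^ 2)) 0 =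
        2⁻¹ * f 0 + r ^ 2 • -f 0 := fun r => by
    rw [(hf.hasDerivAt_zero.fun_mul (((hasDerivAt_sub_div_one_sub _).fun_sub
        ((hasDerivAt_id' 0).const_mul 2⁻¹)).add_const _)).deriv, Complex.real_smul]
    push_cast; ring
  simp_rw [hderiv, integral_two_mul_smul_add_sq_smul, Complex.real_smul]
  push_cast; ring

theorem phi2_functional_and_annPlusC :
    (∃ C₀ C₁ : ℂ, ∀ g, MemA1 g →
      ∫ z, g z * ((1 - (starRingEnd ℂ) z) / (1 - z)) ∂dA = C₀ * g 0 + C₁ * deriv g 0) ∧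
    (∃ p : Polynomial ℂ,
      InAnnA1 (fun z => (1 - z) / (1 - (starRingEnd ℂ) z) - p.eval z)) ∧
    InAnnPlusC (fun z => (1 - z) / (1 - (starRingEnd ℂ) z)) := by
  refine ⟨⟨2⁻¹, -2⁻¹, fun g hg => ?_⟩, ⟨.C 2⁻¹ - .X, ?_⟩, ?_⟩
  · rw [integral_mul_one_sub_conj_div_one_sub_dA hg]
    ring
  · simpa using inAnnA1_one_sub_div_one_sub_conj_sub
  · exact ⟨_, fun z => 2⁻¹ - z, inAnnA1_one_sub_div_one_sub_conj_sub, by fun_prop,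
      ae_of_all _ fun z => (sub_add_cancel _ _).symm⟩
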